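/- Let p be a prime and n ≥ 1. Let ψ : ℚ_p → ℂ^× be a nontrivial continuous additive character, and define the Fourier transform of a locally constant compactly supported φ : M_n(ℚ_p) → ℂ by φ̂(Y) = ∫_{M_n(ℚ_p)} φ(X) ψ(tr(XY)) dX, for a Haar measure on M_n(ℚ_p). If the support of φ is contained in the set of matrices whose characteristic polynomial is irreducible over ℚ_p, then φ̂ is a Lie algebra cusp form: for every proper flag in ℚ_p^n with nilpotent radical 𝔫 (with a Haar measure) and every X ∈ M_n(ℚ_p), ∫_𝔫 φ̂(X + U) dU = 0. -/

import Mathlib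

open Matrix

noncomputable section

/-- A proper flag in `ℚ_p^n`: a strictly increasing chain of `ℚ_p`-subspaces
`0 = V 0 ⊊ V 1 ⊊ ⋯ ⊊ V r = ℚ_p^n` with `r ≥ 2`. -/
structure ProperFlag (p n : ℕ) [Fact p.Prime] where
  r : ℕ
  two_le_r : 2 ≤ r
  V : Fin (r + 1) → Submodule ℚ_[p] (Fin n → ℚ_[p])
  strictMono : StrictMono V
  zero_eq_bot : V 0 = ⊥
  last_eq_top : V (Fin.last r) = ⊤

variable {p n : ℕ} [Fact p.Prime]

namespace ProperFlag

lemma mapsTo_of_mem {F : ProperFlag p n} {g : GL (Fin n) ℚ_[p]}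
    (hg : ∀ i : Fin F.r, ∀ v ∈ F.V i.succ, g.val.mulVec v - v ∈ F.V i.castSucc)
    (i : Fin F.r) : ∀ v ∈ F.V i.succ, g.val.mulVec v ∈ F.V i.succ := by
  intro v hv
  have h1 : g.val.mulVec v - v ∈ F.V i.castSucc := hg i v hv
  have h2 : F.V i.castSucc ≤ F.V i.succ := le_of_lt (F.strictMono Fin.castSucc_lt_succ)
  have := (F.V i.succ).add_mem (h2 h1) hv
  simpa using this

/-- The unipotent radical of a proper flag:
`N = {g ∈ GL_n(ℚ_p) : (g - 1) V_i ⊆ V_{i-1} for all 1 ≤ i ≤ r}`. -/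
def N (F : ProperFlag p n) : Subgroup (GL (Fin n) ℚ_[p]) where
  carrier := {g | ∀ i : Fin F.r, ∀ v ∈ F.V i.succ, g.val.mulVec v - v ∈ F.V i.castSucc}
  one_mem' := by
    intro i v hv
    simp only [Units.val_one, Matrix.one_mulVec, sub_self]
    exact (F.V i.castSucc).zero_mem
  mul_mem' := by
    intro g h hg hh i v hv
    have hw : h.val.mulVec v ∈ F.V i.succ := mapsTo_of_mem hh i v hv
    have h1 : g.val.mulVec (h.val.mulVec v) - h.val.mulVec v ∈ F.V i.castSucc := hg i _ hw
    have h2 : h.val.mulVec v - v ∈ F.V i.castSucc := hh i v hv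
    have := (F.V i.castSucc).add_mem h1 h2
    simpa [Matrix.mulVec_mulVec, Units.val_mul, sub_add_sub_cancel] using this
  inv_mem' := by
    intro g hg i v hv
    -- the restriction of `g` to `F.V i.succ` is a bijection since it is injective
    set W := F.V i.succ with hW
    have hmap : ∀ w ∈ W, g.val.mulVec w ∈ W := mapsTo_of_mem hg i
    let φ : W →ₗ[ℚ_[p]] W := (g.val.mulVecLin).restrict (by
      intro w hw; simpa using hmap w hw)
    have hinj : Function.Injective φ := by
      intro a b hab
      have : g.val.mulVec a.1 = g.val.mulVec b.1 := congrArg Subtype.val hab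
      have h2 : (g⁻¹).val.mulVec (g.val.mulVec a.1) = (g⁻¹).val.mulVec (g.val.mulVec b.1) := by
        rw [this]
      rw [Matrix.mulVec_mulVec, Matrix.mulVec_mulVec, ← Units.val_mul, inv_mul_cancel g,
        Units.val_one, Matrix.one_mulVec, Matrix.one_mulVec] at h2
      exact Subtype.ext h2
    have hsurj : Function.Surjective φ := (LinearMap.injective_iff_surjective).1 hinj
    obtain ⟨⟨w, hw⟩, hweq⟩ := hsurj ⟨v, hv⟩
    have heq : g.val.mulVec w = v := congrArg Subtype.val hweq
    have hginv : (g⁻¹).val.mulVec v = w := by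
      rw [← heq, Matrix.mulVec_mulVec, ← Units.val_mul, inv_mul_cancel g, Units.val_one,
        Matrix.one_mulVec]
    rw [hginv]
    have := (F.V i.castSucc).neg_mem (hg i w hw)
    simp only [neg_sub] at this
    simpa [heq] using this

/-- The nilpotent radical of a proper flag:
`𝔫 = {X ∈ M_n(ℚ_p) : X V_i ⊆ V_{i-1} for all 1 ≤ i ≤ r}`. -/
def nil (F : ProperFlag p n) : Submodule ℚ_[p] (Matrix (Fin n) (Fin n) ℚ_[p]) where
  carrier := {X | ∀ i : Fin F.r, ∀ v ∈ F.V i.succ, X.mulVec v ∈ F.V i.castSucc}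
  zero_mem' := by
    intro i v hv
    simp only [Matrix.zero_mulVec]
    exact (F.V i.castSucc).zero_mem
  add_mem' := by
    intro X Y hX hY i v hv
    have := (F.V i.castSucc).add_mem (hX i v hv) (hY i v hv)
    simpa [Matrix.add_mulVec] using this
  smul_mem' := by
    intro c X hX i v hv
    have := (F.V i.castSucc).smul_mem c (hX i v hv)
    simpa [Matrix.smul_mulVec] using this

noncomputable instance (F : ProperFlag p n) : MeasurableSpace F.N := borel _
instance (F : ProperFlag p n) : BorelSpace F.N := ⟨rfl⟩
noncomputable instance (F : ProperFlag p n) : MeasurableSpace F.nil := borel _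
instance (F : ProperFlag p n) : BorelSpace F.nil := ⟨rfl⟩

end ProperFlag

open MeasureTheory

/-- A cusp form on the Lie algebra `M_n(ℚ_p)`: a locally constant compactly supported
function whose integrals over the nilpotent radical of every proper flag vanish. -/
def IsLieCuspForm (φ : Matrix (Fin n) (Fin n) ℚ_[p] → ℂ) : Prop :=
  IsLocallyConstant φ ∧ HasCompactSupport φ ∧
    ∀ (F : ProperFlag p n) (μ : Measure F.nil), μ.IsAddHaarMeasure →
      ∀ X : Matrix (Fin n) (Fin n) ℚ_[p],
        ∫ U : F.nil, φ (X + (U : Matrix (Fin n) (Fin n) ℚ_[p])) ∂μ = 0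

noncomputable instance : MeasurableSpace (Matrix (Fin n) (Fin n) ℚ_[p]) := borel _
instance : BorelSpace (Matrix (Fin n) (Fin n) ℚ_[p]) := ⟨rfl⟩

/-!
Since `ψ` is trivial near `0` (a continuous character of `ℚ_p` has no small nontrivial values),
`φ̂` is again locally constant, and since `φ` is invariant under small translations, `φ̂` is
compactly supported.

For the cusp-form condition, truncate the integral over `𝔫` to a compact open subgroup `L ⊆ 𝔫`
off which `U ↦ φ̂(X + U)` vanishes, and swap the integrals:
`∫_L φ̂(X + U) dU = ∫ φ(Z) ψ(tr(ZX)) (∫_L ψ(tr(ZU)) dU) dZ`.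
A matrix `Z` with irreducible characteristic polynomial does not preserve `V₁`, so the rank-one
`U = w fᵀ` with `w ∈ V₁`, `f ⊥ V₁`, `f ⬝ Zw = 1` lies in `𝔫` and has `tr(ZU) = 1` (this is
`Z ∉ 𝔫^⊥ = 𝔭`). Hence `U ↦ ψ(tr(ZU))` is a nontrivial character of `𝔫`; by compactness of
`supp φ` it is nontrivial on one large `L` for all `Z ∈ supp φ`, and then its integral over `L`
vanishes.
-/

open Filter Topology Polynomial

theorem Complex.eq_one_of_forall_norm_pow_sub_one_le {z : ℂ} (h : ∀ N : ℕ, ‖z ^ N - 1‖ ≤ 1 / 2) :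
    z = 1 := by
  -- `(z - 1) * ∑_{i<N} z^i = z^N - 1`, and the geometric sum has norm at least `N / 2`.
  have hbound : ∀ N : ℕ, ‖z - 1‖ * N ≤ 1 := by
    intro N
    set S := ∑ i ∈ Finset.range N, z ^ i
    have hS : ‖S - N‖ ≤ N / 2 :=
      calc ‖S - N‖ = ‖∑ i ∈ Finset.range N, (z ^ i - 1)‖ := by simp [S, Finset.sum_sub_distrib]
        _ ≤ ∑ i ∈ Finset.range N, ‖z ^ i - 1‖ := norm_sum_le _ _
        _ ≤ ∑ i ∈ Finset.range N, (1 / 2 : ℝ) := Finset.sum_le_sum fun i _ => h i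
        _ = N / 2 := by simp; ring
    have hSz : ‖S‖ * ‖z - 1‖ ≤ 1 / 2 := by rw [← norm_mul, geom_sum_mul]; exact h N
    have hN : ‖(N : ℂ)‖ - ‖S‖ ≤ ‖S - N‖ := by rw [norm_sub_rev]; exact norm_sub_norm_le _ _
    rw [Complex.norm_natCast] at hN
    nlinarith [norm_nonneg (z - 1)]
  by_contra hz
  have hpos : 0 < ‖z - 1‖ := norm_pos_iff.2 (sub_ne_zero.2 hz)
  obtain ⟨N, hN⟩ := exists_nat_gt (1 / ‖z - 1‖)
  rw [div_lt_iff₀ hpos] at hN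
  linarith [hbound N]

theorem AddChar.eventually_nhds_zero_eq_one {A : Type*} [SeminormedAddGroup A] [IsUltrametricDist A]
    {ψ : AddChar A ℂ} (hψ : Continuous ψ) : ∀ᶠ x in 𝓝 0, ψ x = 1 := by
  have hnear : ∀ᶠ x in 𝓝 (0 : A), ψ x ∈ Metric.closedBall 1 (1 / 2) := by
    refine hψ.continuousAt.eventually_mem ?_
    rw [ψ.map_zero_eq_one]
    exact Metric.closedBall_mem_nhds _ (by norm_num)
  obtain ⟨δ, hδ, hball⟩ := Metric.eventually_nhds_iff_ball.1 hnear
  filter_upwards [Metric.ball_mem_nhds 0 hδ] with x hx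
  refine Complex.eq_one_of_forall_norm_pow_sub_one_le fun N => ?_
  rw [← ψ.map_nsmul_eq_pow, ← dist_eq_norm]
  apply hball
  rw [mem_ball_zero_iff] at hx ⊢
  exact (IsUltrametricDist.norm_nsmul_le x N).trans_lt hx

theorem AddChar.norm_apply_eq_one_of_continuous {ψ : AddChar ℚ_[p] ℂ}
    (hψ : Continuous ψ) (x : ℚ_[p]) : ‖ψ x‖ = 1 := by
  have hsmall : Tendsto (fun m : ℕ => (p : ℚ_[p]) ^ m * x) atTop (𝓝 0) := by
    simpa using (tendsto_pow_atTop_nhds_zero_of_norm_lt_one Padic.norm_p_lt_one).mul_const x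
  obtain ⟨m, hm⟩ := (hsmall.eventually (AddChar.eventually_nhds_zero_eq_one hψ)).exists
  have hpow : ψ x ^ p ^ m = 1 := by
    rw [← ψ.map_nsmul_eq_pow, nsmul_eq_mul, Nat.cast_pow]
    exact hm
  have hnorm := congrArg norm hpow
  rw [norm_pow, norm_one] at hnorm
  exact (pow_eq_one_iff_of_nonneg (norm_nonneg _)
    (pow_ne_zero _ (Fact.out : p.Prime).ne_zero)).1 hnorm

theorem IsLocallyConstant.exists_pos_forall_dist_lt_eq {X β : Type*} [PseudoMetricSpace X] [Zero β]
    {f : X → β} (hf : IsLocallyConstant f) (hc : HasCompactSupport f) :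
    ∃ δ > 0, ∀ x y, dist x y < δ → f x = f y := by
  obtain ⟨δ, hδ, hball⟩ := lebesgue_number_lemma_of_metric hc (c := fun x => {y | f y = f x})
    (fun x => hf.isOpen_fiber _) (fun x _ => Set.mem_iUnion.2 ⟨x, rfl⟩)
  have hnear : ∀ x ∈ tsupport f, ∀ y, dist y x < δ → f y = f x := by
    intro x hx y hy
    obtain ⟨z, hz⟩ := hball x hx
    exact (hz hy).trans (hz (Metric.mem_ball_self hδ)).symm
  refine ⟨δ, hδ, fun x y hxy => ?_⟩
  by_cases hx : x ∈ tsupport f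
  · exact (hnear x hx y (by rwa [dist_comm])).symm
  by_cases hy : y ∈ tsupport f
  · exact hnear y hy x hxy
  rw [image_eq_zero_of_notMem_tsupport hx, image_eq_zero_of_notMem_tsupport hy]

section Translation

variable {G : Type*} [AddGroup G] [MeasurableSpace G] [MeasurableAdd G]

theorem integral_eq_zero_of_add_left_eq_mul (μ : Measure G) [μ.IsAddLeftInvariant] {f : G → ℂ}
    {a : G} {c : ℂ} (hc : c ≠ 1) (hf : ∀ x, f (a + x) = c * f x) : ∫ x, f x ∂μ = 0 := by
  have h := integral_add_left_eq_self f a (μ := μ)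
  simp_rw [hf, integral_const_mul] at h
  have : (c - 1) * ∫ x, f x ∂μ = 0 := by linear_combination h
  exact (mul_eq_zero.1 this).resolve_left (sub_ne_zero.2 hc)

theorem setIntegral_addChar_eq_zero (μ : Measure G) [μ.IsAddLeftInvariant] {L : AddSubgroup G}
    (hL : MeasurableSet (L : Set G)) (χ : AddChar G ℂ) {a : G} (ha : a ∈ L) (hχa : χ a ≠ 1) :
    ∫ u in L, χ u ∂μ = 0 := by
  rw [← integral_indicator hL]
  refine integral_eq_zero_of_add_left_eq_mul μ (a := a) hχa fun u => ?_
  by_cases hu : u ∈ L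
  · simp [Set.indicator_of_mem hu, Set.indicator_of_mem (L.add_mem ha hu), χ.map_add_eq_mul]
  · simp [Set.indicator_of_notMem hu, Set.indicator_of_notMem (mt (L.add_mem_cancel_left ha).1 hu)]

theorem setIntegral_integral_mul_addChar_eq_zero {Ω : Type*} [MeasurableSpace Ω] {ν : Measure G}
    [ν.IsAddLeftInvariant] {μ : Measure Ω} [SFinite μ] {L : AddSubgroup G}
    (hL : MeasurableSet (L : Set G)) (hLν : ν L ≠ ⊤) {g : Ω → ℂ} (hg : Integrable g μ)
    {χ : Ω → AddChar G ℂ}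
    (hχm : AEStronglyMeasurable (fun q : G × Ω => χ q.2 q.1) ((ν.restrict L).prod μ))
    (hχ : ∀ z u, ‖χ z u‖ = 1) (hgχ : ∀ z, g z ≠ 0 → ∃ a ∈ L, χ z a ≠ 1) :
    ∫ u in L, ∫ z, g z * χ z u ∂μ ∂ν = 0 := by
  have : IsFiniteMeasure (ν.restrict L) := isFiniteMeasure_restrict.2 hLν
  have hint : Integrable (Function.uncurry fun u z => g z * χ z u) ((ν.restrict L).prod μ) := by
    refine ((integrable_const (1 : ℝ)).mul_prod hg.norm).mono' (hg.1.comp_snd.mul hχm)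
      (Eventually.of_forall fun q => ?_)
    simp [Function.uncurry, hχ]
  have hinner : ∀ z, ∫ u in L, g z * χ z u ∂ν = 0 := by
    intro z
    by_cases hz : g z = 0
    · simp [hz]
    obtain ⟨a, ha, hχa⟩ := hgχ z hz
    rw [integral_const_mul, setIntegral_addChar_eq_zero ν hL (χ z) ha hχa, mul_zero]
  rw [integral_integral_swap hint]
  simp [hinner]

end Translation

theorem LinearMap.eq_bot_or_eq_top_of_irreducible_charpoly {K V : Type*} [Field K] [AddCommGroup V]
    [Module K V] [FiniteDimensional K V] {f : Module.End K V} (hf : Irreducible f.charpoly)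
    {W : Submodule K V} (hW : W ≤ W.comap f) : W = ⊥ ∨ W = ⊤ := by
  refine or_iff_not_imp_left.2 fun hbot => ?_
  obtain ⟨v, hvW, hv⟩ := W.exists_mem_ne_zero_of_ne_bot hbot
  set d := Module.finrank K V
  -- The Krylov map `q ↦ q(f) v` on polynomials of degree `< d` lands in `W`, and it is injective
  -- because a nonzero such `q` is coprime to the irreducible `f.charpoly`, so `q(f)` is invertible.
  let Φ : degreeLT K d →ₗ[K] V :=
    LinearMap.applyₗ v ∘ₗ (aeval f).toLinearMap ∘ₗ (degreeLT K d).subtype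
  have hΦ : Function.Injective Φ := by
    rw [← LinearMap.ker_eq_bot, LinearMap.ker_eq_bot']
    rintro ⟨q, hq⟩ hΦq
    rw [Submodule.mk_eq_zero]
    by_contra hq0
    have hndvd : ¬ f.charpoly ∣ q := fun hdvd => by
      have h1 := natDegree_le_of_dvd hdvd hq0
      have h2 := (natDegree_lt_iff_degree_lt hq0).2 (mem_degreeLT.1 hq)
      rw [f.charpoly_natDegree] at h1
      omega
    obtain ⟨a, b, hab⟩ := hf.coprime_iff_not_dvd.2 hndvd
    apply hv
    have := congrArg (fun r => aeval f r v) hab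
    simp only [map_add, map_mul, f.aeval_self_charpoly, mul_zero, zero_add, map_one,
      Module.End.mul_apply, Module.End.one_apply] at this
    rw [← this, show aeval f q v = 0 by simpa [Φ] using hΦq, map_zero]
  have hrange : LinearMap.range Φ ≤ W := by
    rintro _ ⟨q, rfl⟩
    exact aeval_apply_smul_mem_of_le_comap hvW q.1 f hW
  refine Submodule.eq_top_of_finrank_eq (le_antisymm W.finrank_le ?_)
  calc d = Module.finrank K (degreeLT K d) := by simp [(degreeLTEquiv K d).finrank_eq]
    _ = Module.finrank K (LinearMap.range Φ) := (LinearMap.finrank_range_of_inj hΦ).symm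
    _ ≤ Module.finrank K W := Submodule.finrank_mono hrange

theorem Submodule.exists_dotProduct_eq_one_of_notMem {K ι : Type*} [Field K] [Fintype ι]
    [DecidableEq ι] {W : Submodule K (ι → K)} {x : ι → K} (hx : x ∉ W) :
    ∃ y : ι → K, (∀ v ∈ W, y ⬝ᵥ v = 0) ∧ y ⬝ᵥ x = 1 := by
  obtain ⟨f, hfx, hfW⟩ := W.exists_dual_map_eq_bot_of_notMem hx inferInstance
  have hdot : ∀ v, (dotProductEquiv K ι).symm f ⬝ᵥ v = f v := fun v =>
    congrArg (· v) ((dotProductEquiv K ι).apply_symm_apply f)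
  refine ⟨(f x)⁻¹ • (dotProductEquiv K ι).symm f, fun v hv => ?_, ?_⟩
  · have hfv : f v ∈ (⊥ : Submodule K K) := hfW ▸ Submodule.mem_map_of_mem hv
    rw [smul_dotProduct, hdot, (Submodule.mem_bot K).1 hfv, smul_zero]
  · rw [smul_dotProduct, hdot, smul_eq_mul, inv_mul_cancel₀ hfx]

namespace ProperFlag

variable (F : ProperFlag p n)

theorem val_one : ((1 : Fin (F.r + 1)) : ℕ) = 1 :=
  Nat.one_mod_eq_one.2 (by have := F.two_le_r; omega)

theorem V_one_ne_bot : F.V 1 ≠ ⊥ := by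
  rw [← F.zero_eq_bot]
  refine (F.strictMono ?_).ne'
  rw [Fin.lt_def, F.val_one]
  exact Nat.one_pos

theorem V_one_ne_top : F.V 1 ≠ ⊤ := by
  rw [← F.last_eq_top]
  refine (F.strictMono ?_).ne
  rw [Fin.lt_def, F.val_one, Fin.val_last]
  exact F.two_le_r

theorem vecMulVec_mem_nil {w y : Fin n → ℚ_[p]} (hw : w ∈ F.V 1)
    (hy : ∀ v ∈ F.V 1, y ⬝ᵥ v = 0) : vecMulVec w y ∈ F.nil := by
  intro i v hv
  rw [vecMulVec_mulVec, op_smul_eq_smul]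
  by_cases hi : (i : ℕ) = 0
  · have hsucc : i.succ = 1 := by
      ext; rw [Fin.val_succ, F.val_one, hi]
    rw [hy v (hsucc ▸ hv), zero_smul]
    exact zero_mem _
  · refine Submodule.smul_mem _ _ (F.strictMono.monotone ?_ hw)
    rw [Fin.le_def, F.val_one, Fin.val_castSucc]
    omega

theorem exists_mem_nil_trace_mul_eq_one {Z : Matrix (Fin n) (Fin n) ℚ_[p]}
    (hZ : Irreducible Z.charpoly) : ∃ U ∈ F.nil, (Z * U).trace = 1 := by
  obtain ⟨w, hw, hZw⟩ : ∃ w ∈ F.V 1, Z *ᵥ w ∉ F.V 1 := by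
    by_contra! h
    have := LinearMap.eq_bot_or_eq_top_of_irreducible_charpoly (f := toLin' Z)
      (by rwa [charpoly_toLin']) (W := F.V 1) fun w hw => by simpa using h w hw
    exact this.elim F.V_one_ne_bot F.V_one_ne_top
  obtain ⟨y, hyW, hyZw⟩ := Submodule.exists_dotProduct_eq_one_of_notMem hZw
  refine ⟨vecMulVec w y, F.vecMulVec_mem_nil hw hyW, ?_⟩
  rw [mul_vecMulVec, ← hyZw, dotProduct_comm]
  rfl

end ProperFlag

instance : SecondCountableTopology (Matrix (Fin n) (Fin n) ℚ_[p]) :=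
  inferInstanceAs (SecondCountableTopology (Fin n → Fin n → ℚ_[p]))

instance : LocallyCompactSpace (Matrix (Fin n) (Fin n) ℚ_[p]) :=
  inferInstanceAs (LocallyCompactSpace (Fin n → Fin n → ℚ_[p]))

theorem IsUltrametricDist.exists_addSubgroup_exhaustion {G : Type*} [SeminormedAddGroup G]
    [IsUltrametricDist G] [ProperSpace G] :
    ∃ L : ℕ → AddSubgroup G, Monotone L ∧ (∀ k, IsCompact (L k : Set G)) ∧
      (∀ k, IsOpen (L k : Set G)) ∧ ∀ x, ∃ k, x ∈ L k := by
  refine ⟨fun k => (closedBall_openAddSubgroup G (Nat.cast_add_one_pos k)).toAddSubgroup,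
    fun k l hkl => Metric.closedBall_subset_closedBall (by gcongr), fun k => isCompact_closedBall _ _,
    fun k => (closedBall_openAddSubgroup G _).isOpen, fun x => ?_⟩
  obtain ⟨k, hk⟩ := exists_nat_ge ‖x‖
  exact ⟨k, mem_closedBall_zero_iff.2 (hk.trans (by linarith))⟩

-- Where topology or measures on matrices are involved, the sup norm is only introduced inside
-- proofs: `Matrix.normedAddCommGroup` is not reducible, so instance search cannot match its
-- topology with the product topology that the Haar measures live on.
theorem ProperFlag.exists_nil_addSubgroup_exhaustion (F : ProperFlag p n) :
    ∃ L : ℕ → AddSubgroup F.nil, Monotone L ∧ (∀ k, IsCompact (L k : Set F.nil)) ∧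
      (∀ k, IsOpen (L k : Set F.nil)) ∧ ∀ u, ∃ k, u ∈ L k := by
  let := Matrix.normedAddCommGroup (n := Fin n) (m := Fin n) (α := ℚ_[p])
  let := Matrix.normedSpace (n := Fin n) (m := Fin n) (α := ℚ_[p]) (R := ℚ_[p])
  have : IsUltrametricDist (Matrix (Fin n) (Fin n) ℚ_[p]) :=
    inferInstanceAs (IsUltrametricDist (Fin n → Fin n → ℚ_[p]))
  have : ProperSpace F.nil := FiniteDimensional.proper ℚ_[p] _
  exact IsUltrametricDist.exists_addSubgroup_exhaustion

def matrixFourier (ψ : AddChar ℚ_[p] ℂ) (μ : Measure (Matrix (Fin n) (Fin n) ℚ_[p]))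
    (φ : Matrix (Fin n) (Fin n) ℚ_[p] → ℂ) (Y : Matrix (Fin n) (Fin n) ℚ_[p]) : ℂ :=
  ∫ X, φ X * ψ ((X * Y).trace) ∂μ

theorem isLocallyConstant_matrixFourier {ψ : AddChar ℚ_[p] ℂ} (hψ : Continuous ψ)
    (μ : Measure (Matrix (Fin n) (Fin n) ℚ_[p])) {φ : Matrix (Fin n) (Fin n) ℚ_[p] → ℂ}
    (hφ : HasCompactSupport φ) : IsLocallyConstant (matrixFourier ψ μ φ) := by
  rw [IsLocallyConstant.iff_eventually_eq]
  intro Y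
  have hclose : ∀ᶠ Y' in 𝓝 Y, ∀ Z ∈ tsupport φ, ψ ((Z * (Y' - Y)).trace) = 1 := by
    refine hφ.isCompact.eventually_forall_of_forall_eventually fun Z _ => ?_
    have hcont : Continuous fun q : Matrix (Fin n) (Fin n) ℚ_[p] × Matrix (Fin n) (Fin n) ℚ_[p] =>
        (q.2 * (q.1 - Y)).trace :=
      (continuous_snd.matrix_mul (continuous_fst.sub continuous_const)).matrix_trace
    have hzero : Tendsto (fun q => (q.2 * (q.1 - Y)).trace) (𝓝 (Y, Z)) (𝓝 0) := by
      simpa using hcont.tendsto (Y, Z)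
    exact hzero.eventually (AddChar.eventually_nhds_zero_eq_one hψ)
  filter_upwards [hclose] with Y' hY'
  refine integral_congr_ae (Eventually.of_forall fun Z => ?_)
  by_cases hZ : Z ∈ tsupport φ
  · dsimp only
    rw [← add_sub_cancel Y Y', Matrix.mul_add, trace_add, AddChar.map_add_eq_mul, hY' Z hZ,
      mul_one]
  · simp [image_eq_zero_of_notMem_tsupport hZ]

section SupNorm

attribute [local instance] Matrix.normedAddCommGroup

theorem Matrix.exists_norm_lt_trace_mul_eq {𝕜 ι : Type*} [NormedField 𝕜] [Fintype ι]
    [DecidableEq ι] {δ : ℝ} (hδ : 0 < δ) (c : 𝕜) :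
    ∃ R, ∀ Y : Matrix ι ι 𝕜, R < ‖Y‖ → ∃ a, ‖a‖ < δ ∧ (a * Y).trace = c := by
  refine ⟨‖c‖ / δ, fun Y hY => ?_⟩
  have hR : 0 ≤ ‖c‖ / δ := by positivity
  obtain ⟨i, j, hij⟩ : ∃ i j, ‖c‖ / δ < ‖Y i j‖ := by
    by_contra! h
    exact hY.not_ge ((norm_le_iff hR).2 h)
  have hYij : Y i j ≠ 0 := norm_pos_iff.1 (hR.trans_lt hij)
  refine ⟨single j i (c / Y i j), ?_, by rw [trace_single_mul, smul_eq_mul, div_mul_cancel₀ _ hYij]⟩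
  have hsmall : ‖c / Y i j‖ < δ := by
    rw [norm_div, div_lt_iff₀ (hR.trans_lt hij)]
    rwa [div_lt_iff₀ hδ, mul_comm] at hij
  refine lt_of_le_of_lt ((norm_le_iff (norm_nonneg _)).2 fun k l => ?_) hsmall
  rw [single_apply]
  split_ifs <;> simp [div_nonneg]

end SupNorm

theorem hasCompactSupport_matrixFourier {ψ : AddChar ℚ_[p] ℂ} (hψ : ψ ≠ 1)
    (μ : Measure (Matrix (Fin n) (Fin n) ℚ_[p])) [μ.IsAddLeftInvariant]
    {φ : Matrix (Fin n) (Fin n) ℚ_[p] → ℂ} (hlc : IsLocallyConstant φ) (hcs : HasCompactSupport φ) :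
    HasCompactSupport (matrixFourier ψ μ φ) := by
  let := Matrix.normedAddCommGroup (n := Fin n) (m := Fin n) (α := ℚ_[p])
  let := Matrix.normedSpace (n := Fin n) (m := Fin n) (α := ℚ_[p]) (R := ℚ_[p])
  have : ProperSpace (Matrix (Fin n) (Fin n) ℚ_[p]) := FiniteDimensional.proper ℚ_[p] _
  obtain ⟨δ, hδ, hφδ⟩ := hlc.exists_pos_forall_dist_lt_eq hcs
  obtain ⟨c, hc⟩ := AddChar.ne_one_iff.1 hψ
  obtain ⟨R, hR⟩ := exists_norm_lt_trace_mul_eq (ι := Fin n) hδ c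
  refine HasCompactSupport.intro (isCompact_closedBall 0 R) fun Y hY => ?_
  obtain ⟨a, ha, htr⟩ := hR Y (by simpa using hY)
  refine integral_eq_zero_of_add_left_eq_mul μ (a := a) hc fun Z => ?_
  rw [hφδ (a + Z) Z (by simpa [dist_eq_norm] using ha), Matrix.add_mul, trace_add,
    AddChar.map_add_eq_mul, htr]
  ring

theorem ProperFlag.exists_mem_addSubgroup_trace_ne_one (F : ProperFlag p n)
    {ψ : AddChar ℚ_[p] ℂ} (hψc : Continuous ψ) (hψ : ψ ≠ 1) {L : ℕ → AddSubgroup F.nil}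
    (hmono : Monotone L) (hexh : ∀ u, ∃ k, u ∈ L k)
    {K : Set (Matrix (Fin n) (Fin n) ℚ_[p])} (hK : IsCompact K)
    (hirr : ∀ Z ∈ K, Irreducible Z.charpoly) :
    ∃ k, ∀ Z ∈ K, ∃ a ∈ L k, ψ ((Z * a).trace) ≠ 1 := by
  obtain ⟨c, hc⟩ := AddChar.ne_one_iff.1 hψ
  let O : ℕ → Set (Matrix (Fin n) (Fin n) ℚ_[p]) := fun k =>
    ⋃ a ∈ L k, {Z | ψ ((Z * a).trace) ≠ 1}
  have hO : ∀ k, IsOpen (O k) := fun k => isOpen_biUnion fun a _ =>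
    isOpen_ne_fun (hψc.comp (continuous_id.matrix_mul continuous_const).matrix_trace)
      continuous_const
  have hcover : K ⊆ ⋃ k, O k := by
    intro Z hZ
    obtain ⟨U, hU, htr⟩ := F.exists_mem_nil_trace_mul_eq_one (hirr Z hZ)
    obtain ⟨k, hk⟩ := hexh ⟨c • U, F.nil.smul_mem c hU⟩
    refine Set.mem_iUnion.2 ⟨k, Set.mem_iUnion₂.2 ⟨_, hk, ?_⟩⟩
    simpa [Matrix.mul_smul, trace_smul, htr] using hc
  have hOmono : Monotone O := fun k l hkl => Set.biUnion_subset_biUnion_left (hmono hkl)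
  obtain ⟨k, hk⟩ := hK.elim_directed_cover O hO hcover hOmono.directed_le
  exact ⟨k, fun Z hZ => by simpa [O] using hk hZ⟩

theorem ProperFlag.integral_nil_matrixFourier_eq_zero (F : ProperFlag p n)
    (ν : Measure F.nil) [ν.IsAddHaarMeasure] (X : Matrix (Fin n) (Fin n) ℚ_[p])
    {ψ : AddChar ℚ_[p] ℂ} (hψc : Continuous ψ) (hψ : ψ ≠ 1)
    (μ : Measure (Matrix (Fin n) (Fin n) ℚ_[p])) [μ.IsAddHaarMeasure]
    {φ : Matrix (Fin n) (Fin n) ℚ_[p] → ℂ} (hlc : IsLocallyConstant φ) (hcs : HasCompactSupport φ)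
    (hirr : Function.support φ ⊆ {Z | Irreducible Z.charpoly}) :
    ∫ U : F.nil, matrixFourier ψ μ φ (X + U) ∂ν = 0 := by
  obtain ⟨L, hmono, hcompact, hopen, hexh⟩ := F.exists_nil_addSubgroup_exhaustion
  have hK : IsCompact (Function.support φ) :=
    hcs.isCompact.of_isClosed_subset (hlc.isClopen_fiber 0).isOpen.isClosed_compl
      (subset_tsupport φ)
  obtain ⟨k₁, hk₁⟩ := F.exists_mem_addSubgroup_trace_ne_one hψc hψ hmono hexh hK hirr
  have hXU : HasCompactSupport fun U : F.nil => matrixFourier ψ μ φ (X + U) :=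
    (hasCompactSupport_matrixFourier hψ μ hlc hcs).comp_isClosedEmbedding
      ((Homeomorph.addLeft X).isClosedEmbedding.comp
        (Submodule.closed_of_finiteDimensional F.nil).isClosedEmbedding_subtypeVal)
  obtain ⟨k₂, hk₂⟩ := hXU.isCompact.elim_directed_cover (fun k => (L k : Set F.nil)) hopen
    (fun u _ => Set.mem_iUnion.2 (hexh u)) hmono.directed_le
  set k := max k₁ k₂
  let χ : Matrix (Fin n) (Fin n) ℚ_[p] → AddChar F.nil ℂ := fun Z =>
    ψ.compAddMonoidHom ((traceLinearMap (Fin n) ℚ_[p] ℚ_[p] ∘ₗ LinearMap.mulLeft ℚ_[p] Z ∘ₗ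
      F.nil.subtype).toAddMonoidHom)
  have hfourier : ∀ U : F.nil, matrixFourier ψ μ φ (X + U) =
      ∫ Z, φ Z * ψ ((Z * X).trace) * χ Z U ∂μ := fun U => by
    simp [matrixFourier, χ, Matrix.mul_add, AddChar.map_add_eq_mul, mul_assoc]
  rw [← setIntegral_eq_integral_of_forall_compl_eq_zero (s := L k) fun U hU =>
    image_eq_zero_of_notMem_tsupport fun h => hU (hmono (le_max_right _ _) (hk₂ h))]
  simp_rw [hfourier]
  refine setIntegral_integral_mul_addChar_eq_zero (hopen k).measurableSet
    (hcompact k).measure_lt_top.ne ?_ ?_ (fun Z U => AddChar.norm_apply_eq_one_of_continuous hψc _)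
    fun Z hZ => ?_
  · exact (hlc.continuous.mul (hψc.comp (continuous_id.matrix_mul continuous_const).matrix_trace)
      ).integrable_of_hasCompactSupport hcs.mul_right
  · exact (hψc.comp (continuous_snd.matrix_mul
      (continuous_subtype_val.comp continuous_fst)).matrix_trace).aestronglyMeasurable
  · obtain ⟨a, ha, hψa⟩ := hk₁ Z (left_ne_zero_of_mul hZ)
    exact ⟨a, hmono (le_max_left _ _) ha, hψa⟩

theorem fourier_of_elliptic_supported_is_lie_cusp_form_general
    (p : ℕ) [Fact p.Prime] (n : ℕ)
    (ψ : AddChar ℚ_[p] ℂ) (hψcont : Continuous ψ) (hψnt : ψ ≠ 1)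
    (μ : MeasureTheory.Measure (Matrix (Fin n) (Fin n) ℚ_[p])) [μ.IsAddHaarMeasure]
    (φ : Matrix (Fin n) (Fin n) ℚ_[p] → ℂ)
    (hφlc : IsLocallyConstant φ) (hφsupp : HasCompactSupport φ)
    (hsupp : Function.support φ ⊆
      {X : Matrix (Fin n) (Fin n) ℚ_[p] | Irreducible X.charpoly}) :
    IsLieCuspForm (fun Y : Matrix (Fin n) (Fin n) ℚ_[p] =>
      ∫ X : Matrix (Fin n) (Fin n) ℚ_[p], φ X * ψ ((X * Y).trace) ∂μ) :=
  ⟨isLocallyConstant_matrixFourier hψcont μ hφsupp,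
    hasCompactSupport_matrixFourier hψnt μ hφlc hφsupp,
    fun F ν _ X => F.integral_nil_matrixFourier_eq_zero ν X hψcont hψnt μ hφlc hφsupp hsupp⟩

/-- If a locally constant compactly supported `φ : M_n(ℚ_p) → ℂ` is
supported in the set of matrices with irreducible characteristic polynomial, then its
Fourier transform `φ̂(Y) = ∫ φ(X) ψ(tr(XY)) dX` (with respect to the trace form and a
nontrivial continuous additive character `ψ`) is a Lie algebra cusp form. -/
theorem fourier_of_elliptic_supported_is_lie_cusp_form
    (p : ℕ) [Fact p.Prime] (n : ℕ) (hn : 1 ≤ n)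
    (ψ : AddChar ℚ_[p] ℂ) (hψcont : Continuous ψ) (hψnt : ψ ≠ 1)
    (μ : MeasureTheory.Measure (Matrix (Fin n) (Fin n) ℚ_[p])) [μ.IsAddHaarMeasure]
    (φ : Matrix (Fin n) (Fin n) ℚ_[p] → ℂ)
    (hφlc : IsLocallyConstant φ) (hφsupp : HasCompactSupport φ)
    (hsupp : Function.support φ ⊆
      {X : Matrix (Fin n) (Fin n) ℚ_[p] | Irreducible X.charpoly}) :
    IsLieCuspForm (fun Y : Matrix (Fin n) (Fin n) ℚ_[p] =>
      ∫ X : Matrix (Fin n) (Fin n) ℚ_[p], φ X * ψ ((X * Y).trace) ∂μ) :=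
  fourier_of_elliptic_supported_is_lie_cusp_form_general p n ψ hψcont hψnt μ φ hφlc hφsupp hsupp
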